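/- arXiv:2312.04088 — 3 statements merged into one kernel-verified Lean document; each statement's English description precedes it below -/
import Mathlib

section
/- Let G be a simple graph with proper coloring c and attribute function A, let δ be a natural number, and let S be a finite vertex set. Then every clique S' of G with S' ⊆ S and |cnt_{S'}(a) − cnt_{S'}(b)| ≤ δ satisfies |S'| ≤ 2·min(|{c(v) : v ∈ S, A(v) = a}|, |{c(v) : v ∈ S, A(v) = b}|) + δ. -/
namespace SimpleGraph

variable {V α : Type*} {G : SimpleGraph V} {c : V → α}

theorem IsClique.injOn_of_adj_ne {s : Set V} (hs : G.IsClique s)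
    (hc : ∀ u v, G.Adj u v → c u ≠ c v) : s.InjOn c := by
  intro u hu v hv huv
  by_contra hne
  exact hc u v (hs hu hv hne) huv

theorem IsClique.card_le_card_image_of_subset [DecidableEq α] {s t : Finset V}
    (hs : G.IsClique (s : Set V)) (hc : ∀ u v, G.Adj u v → c u ≠ c v) (hst : s ⊆ t) :
    s.card ≤ (t.image c).card :=
  calc s.card = (s.image c).card := (Finset.card_image_of_injOn (hs.injOn_of_adj_ne hc)).symm
    _ ≤ (t.image c).card := Finset.card_le_card (Finset.image_subset_image hst)

end SimpleGraph

theorem Nat.add_le_two_mul_min_add {a b m n δ : ℕ} (ha : a ≤ m) (hb : b ≤ n)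
    (hab : |(a : ℤ) - b| ≤ δ) : a + b ≤ 2 * min m n + δ := by
  have := abs_le.mp hab
  omega

theorem stmt_7_general {V : Type*} [DecidableEq V]
    (G : SimpleGraph V)
    (c : V → ℕ) (hc : ∀ u v : V, G.Adj u v → c u ≠ c v)
    (A : V → Bool) (δ : ℕ) (S : Finset V) :
    ∀ S' : Finset V, G.IsClique (S' : Set V) → S' ⊆ S →
      |((S'.filter (fun v => A v = true)).card : ℤ) -
        ((S'.filter (fun v => A v = false)).card : ℤ)| ≤ (δ : ℤ) →
      S'.card ≤
        2 * min ((S.filter (fun v => A v = true)).image c).card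
                ((S.filter (fun v => A v = false)).image c).card + δ := by
  intro S' hclique hsub hdiff
  have hcount (t : Bool) : (S'.filter (fun v => A v = t)).card ≤
      ((S.filter (fun v => A v = t)).image c).card :=
    (hclique.subset (Finset.filter_subset _ _)).card_le_card_image_of_subset hc
      (Finset.filter_subset_filter _ hsub)
  have hsplit : S'.card =
      (S'.filter (fun v => A v = true)).card + (S'.filter (fun v => A v = false)).card := by
    simpa using (Finset.card_filter_add_card_filter_not (s := S') (fun v => A v = true)).symm
  rw [hsplit]
  exact Nat.add_le_two_mul_min_add (hcount true) (hcount false) hdiff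

/-- attribute-color-based upper bound: every clique `S' ⊆ S`
whose attribute counts differ by at most `δ` satisfies
`|S'| ≤ 2 * min(#colors of attribute-a vertices of S, #colors of attribute-b
vertices of S) + δ`. -/
theorem stmt_7 {V : Type*} [Fintype V] [DecidableEq V]
    (G : SimpleGraph V) [DecidableRel G.Adj]
    (c : V → ℕ) (hc : ∀ u v : V, G.Adj u v → c u ≠ c v)
    (A : V → Bool) (δ : ℕ) (S : Finset V) :
    ∀ S' : Finset V, G.IsClique (S' : Set V) → S' ⊆ S →
      |((S'.filter (fun v => A v = true)).card : ℤ) -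
        ((S'.filter (fun v => A v = false)).card : ℤ)| ≤ (δ : ℤ) →
      S'.card ≤
        2 * min ((S.filter (fun v => A v = true)).image c).card
                ((S.filter (fun v => A v = false)).image c).card + δ :=
  stmt_7_general G c hc A δ S
end

section
/- Let G be a simple graph on a finite vertex type and let d be a natural number. If there exists a nonempty finite vertex set T such that every vertex of T has at least d neighbors inside T (i.e., the degeneracy of G is at least d), then at least d + 1 vertices of G have degree at least d; consequently the h-index of G is at least its degeneracy. -/
/-- The h-index of a graph: the greatest `h` such that at least `h` vertices
have degree at least `h`. -/
noncomputable def hIndex {V : Type*} [Fintype V] (G : SimpleGraph V)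
    [DecidableRel G.Adj] : ℕ :=
  sSup {h : ℕ | h ≤ (Finset.univ.filter (fun v => h ≤ G.degree v)).card}

/-- The degeneracy of a graph: the greatest `d` witnessed by a nonempty finite
vertex set `T` all of whose vertices have at least `d` neighbors inside `T`. -/
noncomputable def degeneracy {V : Type*} [Fintype V] (G : SimpleGraph V)
    [DecidableRel G.Adj] : ℕ :=
  sSup {d : ℕ | ∃ T : Finset V, T.Nonempty ∧
    ∀ v ∈ T, d ≤ (T.filter (fun u => G.Adj v u)).card}

namespace SimpleGraph

variable {V : Type*} (G : SimpleGraph V) [DecidableRel G.Adj]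

theorem card_filter_adj_le_degree (v : V) [Fintype (G.neighborSet v)] (s : Finset V) :
    (s.filter (fun u => G.Adj v u)).card ≤ G.degree v := by
  rw [← card_neighborFinset_eq_degree]
  exact Finset.card_le_card fun u hu => (mem_neighborFinset G v u).2 (Finset.mem_filter.1 hu).2

theorem card_filter_adj_lt_card {s : Finset V} {v : V} (hv : v ∈ s) :
    (s.filter (fun u => G.Adj v u)).card < s.card :=
  Finset.card_lt_card <| (Finset.ssubset_iff_of_subset (Finset.filter_subset _ s)).2
    ⟨v, hv, fun h => G.irrefl (Finset.mem_filter.1 h).2⟩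

theorem succ_le_card_filter_le_degree [Fintype V] {T : Finset V} (hT : T.Nonempty) {d : ℕ}
    (hd : ∀ v ∈ T, d ≤ (T.filter (fun u => G.Adj v u)).card) :
    d + 1 ≤ (Finset.univ.filter (fun v => d ≤ G.degree v)).card := by
  obtain ⟨v, hv⟩ := hT
  have hsub : T ⊆ Finset.univ.filter (fun v => d ≤ G.degree v) := fun u hu =>
    Finset.mem_filter.2 ⟨Finset.mem_univ u, (hd u hu).trans (G.card_filter_adj_le_degree u T)⟩
  calc d + 1 ≤ T.card := (hd v hv).trans_lt (G.card_filter_adj_lt_card hv)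
    _ ≤ _ := Finset.card_le_card hsub

theorem le_hIndex [Fintype V] {h : ℕ}
    (hh : h ≤ (Finset.univ.filter (fun v => h ≤ G.degree v)).card) : h ≤ hIndex G :=
  le_csSup ⟨Fintype.card V, fun _ hk => hk.trans (Finset.card_le_univ _)⟩ hh

theorem degeneracy_le_hIndex [Fintype V] : degeneracy G ≤ hIndex G :=
  csSup_le' fun _ ⟨_, hT, hd⟩ =>
    G.le_hIndex ((Nat.le_succ _).trans (G.succ_le_card_filter_le_degree hT hd))

end SimpleGraph

theorem stmt_10_general {V : Type*} [Fintype V]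
    (G : SimpleGraph V) [DecidableRel G.Adj] (d : ℕ)
    (hT : ∃ T : Finset V, T.Nonempty ∧
      ∀ v ∈ T, d ≤ (T.filter (fun u => G.Adj v u)).card) :
    d + 1 ≤ (Finset.univ.filter (fun v => d ≤ G.degree v)).card ∧
    degeneracy G ≤ hIndex G := by
  obtain ⟨T, hne, hd⟩ := hT
  exact ⟨G.succ_le_card_filter_le_degree hne hd, G.degeneracy_le_hIndex⟩

/-- if there is a nonempty finite vertex set `T` in which every
vertex has at least `d` neighbors inside `T`, then at least `d + 1` vertices of
`G` have degree at least `d`; consequently the h-index of `G` is at least its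
degeneracy. -/
theorem stmt_10 {V : Type*} [Fintype V] [DecidableEq V]
    (G : SimpleGraph V) [DecidableRel G.Adj] (d : ℕ)
    (hT : ∃ T : Finset V, T.Nonempty ∧
      ∀ v ∈ T, d ≤ (T.filter (fun u => G.Adj v u)).card) :
    d + 1 ≤ (Finset.univ.filter (fun v => d ≤ G.degree v)).card ∧
    degeneracy G ≤ hIndex G :=
  stmt_10_general G d hT
end

section
/- Define the colorful core number ccore(v) of a vertex v as the greatest natural number k for which there exists a finite vertex set T containing v such that every u ∈ T has, for each attribute t ∈ {a, b}, at least k distinct values of c among its neighbors within T that have attribute t. Let u be a vertex with maximum colorful core number, i.e., ccore(w) ≤ ccore(u) for all vertices w. Then every clique S of G with |cnt_S(a) − cnt_S(b)| ≤ δ and cnt_S(a) ≥ 1, cnt_S(b) ≥ 1 satisfies |S| ≤ 2·min(D_a(u), D_b(u)) + δ + 2. -/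
/-!
In a properly coloured clique `S` every vertex sees all other vertices of `S`, in pairwise distinct
colours, so `S` itself witnesses `ccore v ≥ min(cnt_S(a), cnt_S(b)) - 1` for any `v ∈ S`.
On the other hand the colorful core number of `u` is at most `D_a(u)` and `D_b(u)`. Maximality of
`ccore u` then bounds `min(cnt_S(a), cnt_S(b))`, and the balance condition bounds the other count.
-/

/-- The colorful core number of `v`. -/
noncomputable def ccore {V : Type*} [Fintype V] [DecidableEq V]
    (G : SimpleGraph V) [DecidableRel G.Adj]
    (c : V → ℕ) (A : V → Bool) (v : V) : ℕ :=
  sSup {k : ℕ | ∃ T : Finset V, v ∈ T ∧ ∀ u ∈ T, ∀ t : Bool,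
    k ≤ ((T.filter (fun w => G.Adj u w ∧ A w = t)).image c).card}

namespace SimpleGraph

variable {V : Type*} (G : SimpleGraph V) [DecidableRel G.Adj]

lemma IsClique.card_filter_sub_one_le_card_image_adj {S : Finset V} (hS : G.IsClique (S : Set V))
    {c : V → ℕ} (hc : ∀ u v : V, G.Adj u v → c u ≠ c v) (p : V → Prop) [DecidablePred p]
    {w : V} (hw : w ∈ S) :
    (S.filter p).card - 1 ≤ ((S.filter (fun x => G.Adj w x ∧ p x)).image c).card := by
  classical
  have hsub : (S.filter p).erase w ⊆ S.filter (fun x => G.Adj w x ∧ p x) := by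
    intro x hx
    simp only [Finset.mem_erase, Finset.mem_filter] at hx ⊢
    exact ⟨hx.2.1, hS hw hx.2.1 (Ne.symm hx.1), hx.2.2⟩
  have hinj : Set.InjOn c ((S.filter p).erase w : Set V) := by
    intro x hx y hy hxy
    by_contra hne
    exact hc x y (hS (Finset.mem_filter.mp (Finset.mem_of_mem_erase hx)).1
      (Finset.mem_filter.mp (Finset.mem_of_mem_erase hy)).1 hne) hxy
  calc (S.filter p).card - 1
      ≤ ((S.filter p).erase w).card := Finset.pred_card_le_card_erase
    _ = (((S.filter p).erase w).image c).card := (Finset.card_image_of_injOn hinj).symm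
    _ ≤ _ := Finset.card_le_card (Finset.image_subset_image hsub)

variable [Fintype V] [DecidableEq V] (c : V → ℕ) (A : V → Bool)

lemma le_ccore {v : V} {k : ℕ} {T : Finset V} (hv : v ∈ T)
    (hT : ∀ u ∈ T, ∀ t : Bool, k ≤ ((T.filter (fun w => G.Adj u w ∧ A w = t)).image c).card) :
    k ≤ ccore G c A v := by
  refine le_csSup ⟨Fintype.card V, ?_⟩ ⟨T, hv, hT⟩
  rintro k ⟨T, hvT, hT⟩
  calc k ≤ ((T.filter (fun w => G.Adj v w ∧ A w = true)).image c).card := hT v hvT true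
    _ ≤ (T.filter (fun w => G.Adj v w ∧ A w = true)).card := Finset.card_image_le
    _ ≤ T.card := Finset.card_filter_le _ _
    _ ≤ Fintype.card V := Finset.card_le_univ _

lemma ccore_le_card_image_neighborFinset_filter (v : V) (t : Bool) :
    ccore G c A v ≤ (((G.neighborFinset v).filter (fun w => A w = t)).image c).card := by
  refine csSup_le' ?_
  rintro k ⟨T, hvT, hT⟩
  refine (hT v hvT t).trans (Finset.card_le_card (Finset.image_subset_image ?_))
  intro x hx
  simp only [Finset.mem_filter, mem_neighborFinset] at hx ⊢
  exact ⟨hx.2.1, hx.2.2⟩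

lemma IsClique.min_card_filter_sub_one_le_ccore {S : Finset V} (hS : G.IsClique (S : Set V))
    (hc : ∀ u v : V, G.Adj u v → c u ≠ c v) {v : V} (hv : v ∈ S) :
    min (S.filter (fun x => A x = true)).card (S.filter (fun x => A x = false)).card - 1 ≤
      ccore G c A v := by
  refine le_ccore G c A hv fun w hw t => ?_
  refine le_trans ?_ (hS.card_filter_sub_one_le_card_image_adj G hc (fun x => A x = t) hw)
  cases t
  · exact Nat.sub_le_sub_right (min_le_right _ _) 1
  · exact Nat.sub_le_sub_right (min_le_left _ _) 1

end SimpleGraph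

open SimpleGraph in
/-- colorful-degeneracy-based upper bound: let `u` be a vertex
with maximum colorful core number.  Then every clique `S` with attribute
counts differing by at most `δ` and containing at least one vertex of each
attribute satisfies `|S| ≤ 2 * min(D_a(u), D_b(u)) + δ + 2`. -/
theorem stmt_13 {V : Type*} [Fintype V] [DecidableEq V]
    (G : SimpleGraph V) [DecidableRel G.Adj]
    (c : V → ℕ) (hc : ∀ u v : V, G.Adj u v → c u ≠ c v)
    (A : V → Bool) (δ : ℕ)
    (u : V) (hu : ∀ w : V, ccore G c A w ≤ ccore G c A u) :
    ∀ S : Finset V, G.IsClique (S : Set V) →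
      |((S.filter (fun v => A v = true)).card : ℤ) -
        ((S.filter (fun v => A v = false)).card : ℤ)| ≤ (δ : ℤ) →
      1 ≤ (S.filter (fun v => A v = true)).card →
      1 ≤ (S.filter (fun v => A v = false)).card →
      S.card ≤
        2 * min (((G.neighborFinset u).filter (fun w => A w = true)).image c).card
                (((G.neighborFinset u).filter (fun w => A w = false)).image c).card
          + δ + 2 := by
  intro S hS hδ ha _
  obtain ⟨v, hv⟩ : S.Nonempty := Finset.card_pos.mp (ha.trans (Finset.card_filter_le _ _))
  have hmin := (hS.min_card_filter_sub_one_le_ccore G c A hc hv).trans (hu v)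
  have hDa := ccore_le_card_image_neighborFinset_filter G c A u true
  have hDb := ccore_le_card_image_neighborFinset_filter G c A u false
  have hsplit := Finset.card_filter_add_card_filter_not (s := S) (fun v => A v = true)
  simp only [Bool.not_eq_true] at hsplit
  have := le_abs_self _ |>.trans hδ
  have := neg_le_of_abs_le hδ
  omega
end
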